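/- Let Λ be a (possibly noncommutative) Noetherian ring and P a finitely generated left Λ-module with projective dimension at most 1. If M ⊆ P is a submodule such that Ext^0_Λ(M, Λ) = 0 and Ext^1_Λ(M, Λ) = 0, then M = 0. -/

import Mathlib

open CategoryTheory CategoryTheory.Limits Opposite

section Aux
variable {Λ : Type} [Ring Λ]


variable {Λ : Type} [Ring Λ]

lemma hom_eq_zero_of_ext0 {N : Type} [AddCommGroup N] [Module Λ N]
    (h0 : Subsingleton (((Ext ℤ (ModuleCat Λ) 0).obj (op (ModuleCat.of Λ N))).obj
      (ModuleCat.of Λ Λ)))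
    (φ : N →ₗ[Λ] Λ) : φ = 0 := by
  set Y : ModuleCat Λ := ModuleCat.of Λ Λ with hY
  obtain ⟨P⟩ := (HasProjectiveResolution.out (Z := ModuleCat.of Λ N))
  have hz : IsZero (((Ext ℤ (ModuleCat Λ) 0).obj (op (ModuleCat.of Λ N))).obj Y) :=
    ModuleCat.isZero_of_subsingleton _
  have hhom : IsZero ((P.complex.linearYonedaObj ℤ Y).homology 0) :=
    hz.of_iso (P.isoExt 0 Y).symm
  have hex : (P.complex.linearYonedaObj ℤ Y).ExactAt 0 :=
    (HomologicalComplex.exactAt_iff_isZero_homology _ _).2 hhom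
  rw [HomologicalComplex.exactAt_iff' _ 0 0 1 (by simp) (by simp),
    ShortComplex.moduleCat_exact_iff] at hex
  have hπ : Function.Surjective (P.π.f 0) := by
    rw [← ModuleCat.epi_iff_surjective]; infer_instance
  let φ' : ((ChainComplex.single₀ (ModuleCat Λ)).obj (ModuleCat.of Λ N)).X 0 ⟶ Y := ModuleCat.ofHom φ
  let x : (P.complex.linearYonedaObj ℤ Y).X 0 := (P.π.f 0 ≫ φ')
  have hdx : (P.complex.linearYonedaObj ℤ Y).d 0 1 x = 0 := by
    show (P.complex.linearYonedaObj ℤ Y).d 0 1 x = (0 : P.complex.X 1 ⟶ Y)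
    rw [ChainComplex.linearYonedaObj_d]
    show P.complex.d 1 0 ≫ (P.π.f 0 ≫ φ') = 0
    rw [← Category.assoc, P.complex_d_comp_π_f_zero, zero_comp]
  obtain ⟨y, hy⟩ := hex x hdx
  have hx0 : x = 0 := by
    rw [← hy]
    show (P.complex.linearYonedaObj ℤ Y).d 0 0 y = 0
    rw [(P.complex.linearYonedaObj ℤ Y).shape 0 0 (by simp)]
    rfl
  ext n
  obtain ⟨p, hp⟩ := hπ n
  have h2 : (P.π.f 0 ≫ φ') = (0 : P.complex.X 0 ⟶ Y) := hx0
  rw [← hp]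
  exact congrArg (fun (g : P.complex.X 0 ⟶ Y) => g p) h2


variable {Λ : Type} [Ring Λ]

lemma descend_aux {A B N : Type} [AddCommGroup A] [Module Λ A] [AddCommGroup B] [Module Λ B]
    [AddCommGroup N] [Module Λ N] (p : A →ₗ[Λ] N) (hp : Function.Surjective p)
    (Φ : A →ₗ[Λ] B) (h : LinearMap.ker p ≤ LinearMap.ker Φ) :
    ∃ ψ : N →ₗ[Λ] B, ψ ∘ₗ p = Φ := by
  let e := p.quotKerEquivOfSurjective hp
  refine ⟨((LinearMap.ker p).liftQ Φ h) ∘ₗ e.symm.toLinearMap, ?_⟩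
  ext a
  have he : e (Submodule.Quotient.mk a) = p a := by
    simp [e, LinearMap.quotKerEquivOfSurjective]
  have : e.symm (p a) = Submodule.Quotient.mk a := by
    rw [← he, LinearEquiv.symm_apply_apply]
  simp [this]

lemma ofInjective_symm {A : Type} [AddCommGroup A] [Module Λ A] (i : Λ →ₗ[Λ] A)
    (hi : Function.Injective i) (w : LinearMap.range i) :
    i ((LinearEquiv.ofInjective i hi).symm w) = w := by
  conv_rhs => rw [← LinearEquiv.apply_symm_apply (LinearEquiv.ofInjective i hi) w]
  rw [LinearEquiv.ofInjective_apply]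

lemma retraction_of_ext1 {N : Type} [AddCommGroup N] [Module Λ N]
    (h1 : Subsingleton (((Ext ℤ (ModuleCat Λ) 1).obj (op (ModuleCat.of Λ N))).obj
      (ModuleCat.of Λ Λ)))
    {E : Type} [AddCommGroup E] [Module Λ E] (i : Λ →ₗ[Λ] E) (π : E →ₗ[Λ] N)
    (hi : Function.Injective i) (hπ : Function.Surjective π)
    (hex : ∀ e, π e = 0 ↔ e ∈ LinearMap.range i) :
    ∃ r : E →ₗ[Λ] Λ, ∀ a, r (i a) = a := by
  set Y : ModuleCat Λ := ModuleCat.of Λ Λ with hY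
  obtain ⟨P⟩ := (HasProjectiveResolution.out (Z := ModuleCat.of Λ N))
  have hz : IsZero (((Ext ℤ (ModuleCat Λ) 1).obj (op (ModuleCat.of Λ N))).obj Y) :=
    ModuleCat.isZero_of_subsingleton _
  have hex1 : (P.complex.linearYonedaObj ℤ Y).ExactAt 1 :=
    (HomologicalComplex.exactAt_iff_isZero_homology _ _).2
      (hz.of_iso (P.isoExt 1 Y).symm)
  rw [HomologicalComplex.exactAt_iff' _ 0 1 2 (by simp) (by simp),
    ShortComplex.moduleCat_exact_iff] at hex1
  let πc : ModuleCat.of Λ E ⟶ ((ChainComplex.single₀ (ModuleCat Λ)).obj (ModuleCat.of Λ N)).X 0 := ModuleCat.ofHom π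
  have hπc : Epi πc :=
    (ModuleCat.epi_iff_surjective _).2 hπ
  let h₀ : P.complex.X 0 ⟶ ModuleCat.of Λ E :=
    Projective.factorThru (P.π.f 0) πc
  have hcomp : ∀ z, π (h₀ z) = P.π.f 0 z := by
    intro z
    exact congrArg (fun (g : P.complex.X 0 ⟶ ModuleCat.of Λ N) => g z)
      (Projective.factorThru_comp (P.π.f 0) πc)
  let u : P.complex.X 1 →ₗ[Λ] E := (P.complex.d 1 0 ≫ h₀).hom
  have hu : ∀ z, u z ∈ LinearMap.range i := by
    intro z
    rw [← hex]
    show π (h₀ (P.complex.d 1 0 z)) = 0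
    rw [hcomp]
    exact congrArg (fun (g : P.complex.X 1 ⟶ ModuleCat.of Λ N) => g z)
      P.complex_d_comp_π_f_zero
  let eqI := LinearEquiv.ofInjective i hi
  let c : P.complex.X 1 →ₗ[Λ] Λ :=
    eqI.symm.toLinearMap ∘ₗ (u.codRestrict (LinearMap.range i) hu)
  have hic : ∀ z, i (c z) = u z := fun z => ofInjective_symm i hi _
  -- c is a cycle
  have hdc : (P.complex.linearYonedaObj ℤ Y).d 1 2 (ModuleCat.ofHom c : P.complex.X 1 ⟶ Y) = 0 := by
    show (P.complex.linearYonedaObj ℤ Y).d 1 2 _ = (0 : P.complex.X 2 ⟶ Y)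
    rw [ChainComplex.linearYonedaObj_d]
    show P.complex.d 2 1 ≫ ModuleCat.ofHom c = 0
    ext z
    apply hi
    show i (c (P.complex.d 2 1 z)) = i 0
    rw [hic, map_zero]
    show h₀ (P.complex.d 1 0 (P.complex.d 2 1 z)) = 0
    have : P.complex.d 1 0 (P.complex.d 2 1 z) = 0 :=
      congrArg (fun (g : P.complex.X 2 ⟶ P.complex.X 0) => g z)
        (P.complex.d_comp_d 2 1 0)
    rw [this, map_zero]
  obtain ⟨ψ₀, hψ⟩ := hex1 (ModuleCat.ofHom c) hdc
  let ψ : P.complex.X 0 ⟶ Y := ψ₀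
  have hψ' : ∀ z, ψ (P.complex.d 1 0 z) = c z := by
    intro z
    have h : (P.complex.linearYonedaObj ℤ Y).d 0 1 ψ = ModuleCat.ofHom c := hψ
    rw [ChainComplex.linearYonedaObj_d] at h
    exact congrArg (fun (g : P.complex.X 1 ⟶ Y) => g z) h
  -- build the section s : N →ₗ E
  let t : P.complex.X 0 →ₗ[Λ] N := (P.π.f 0).hom
  have ht : Function.Surjective t := by
    have : Epi (P.π.f 0) := inferInstance
    exact (ModuleCat.epi_iff_surjective (P.π.f 0)).1 this
  let h₀' : P.complex.X 0 →ₗ[Λ] E := h₀.hom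
  let ψ' : P.complex.X 0 →ₗ[Λ] Λ := ψ.hom
  let g : P.complex.X 0 →ₗ[Λ] E := h₀' - i ∘ₗ ψ'
  have hker : LinearMap.ker t ≤ LinearMap.ker g := by
    intro z hz
    have hz' : P.π.f 0 z = 0 := hz
    obtain ⟨w, hw⟩ := (ShortComplex.moduleCat_exact_iff _).1 P.exact₀ z hz'
    have hw' : P.complex.d 1 0 w = z := hw
    show g z = 0
    have hgz : g z = h₀' (P.complex.d 1 0 w) - i (ψ (P.complex.d 1 0 w)) := by
      rw [← hw']; rfl
    rw [hgz, hψ', hic]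
    show h₀ (P.complex.d 1 0 w) - h₀ (P.complex.d 1 0 w) = 0
    rw [sub_self]
  obtain ⟨s, hs⟩ := descend_aux t ht g hker
  have hst : ∀ z, s (t z) = g z := fun z =>
    congrArg (fun (F : _ →ₗ[Λ] E) => F z) hs
  have hπs : ∀ n, π (s n) = n := by
    intro n
    obtain ⟨z, hz⟩ := ht n
    rw [← hz, hst]
    show π (h₀' z - i (ψ' z)) = t z
    rw [map_sub]
    have hc2 : π (h₀' z) = t z := hcomp z
    have : π (i (ψ' z)) = 0 := (hex _).2 ⟨ψ' z, rfl⟩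
    rw [this, sub_zero, hc2]
  -- build retraction from section
  have hmem : ∀ e : E, e - s (π e) ∈ LinearMap.range i := by
    intro e
    rw [← hex, map_sub, hπs, sub_self]
  let r : E →ₗ[Λ] Λ :=
    eqI.symm.toLinearMap ∘ₗ
      ((LinearMap.id - s ∘ₗ π).codRestrict (LinearMap.range i) hmem)
  refine ⟨r, fun a => ?_⟩
  apply hi
  have : i (r (i a)) = i a - s (π (i a)) := ofInjective_symm i hi _
  rw [this]
  have : π (i a) = 0 := (hex _).2 ⟨a, rfl⟩
  rw [this, map_zero, sub_zero]


variable {Λ : Type} [Ring Λ]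

lemma exists_dual_ne_zero {F : Type} [AddCommGroup F] [Module Λ F] [Module.Projective Λ F]
    {x : F} (hx : x ≠ 0) : ∃ φ : F →ₗ[Λ] Λ, φ x ≠ 0 := by
  obtain ⟨s, hs⟩ := Module.projective_def.1 ‹Module.Projective Λ F›
  have hsx : s x ≠ 0 := fun h => hx (by rw [← hs x, h, map_zero])
  obtain ⟨a, ha⟩ := Finsupp.ne_iff.1 hsx
  exact ⟨(Finsupp.lapply a) ∘ₗ s, by simpa using ha⟩

lemma dual_basis {K : Type} [DecidableEq K] [AddCommGroup K] [Module Λ K] [Module.Projective Λ K]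
    [Module.Finite Λ K] :
    ∃ (S : Finset K) (cf : K → (K →ₗ[Λ] Λ)), ∀ k : K, ∑ a ∈ S, (cf a) k • a = k := by
  obtain ⟨s, hs⟩ := Module.projective_def.1 ‹Module.Projective Λ K›
  obtain ⟨T, hT⟩ := Module.Finite.fg_top (R := Λ) (M := K)
  refine ⟨T.biUnion (fun t => (s t).support), fun a => (Finsupp.lapply a) ∘ₗ s, fun k => ?_⟩
  have hsupp : ∀ k : K, (s k).support ⊆ T.biUnion (fun t => (s t).support) := by
    intro k
    have hk : k ∈ (⊤ : Submodule Λ K) := trivial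
    rw [← hT] at hk
    induction hk using Submodule.span_induction with
    | mem y hy => exact fun a ha => Finset.mem_biUnion.2 ⟨y, hy, ha⟩
    | zero => simp
    | add y z _ _ hy hz =>
        intro a ha
        rw [map_add] at ha
        rcases Finset.mem_union.1 (Finsupp.support_add ha) with h | h
        · exact hy h
        · exact hz h
    | smul c y _ hy =>
        intro a ha
        rw [map_smul] at ha
        exact hy (Finsupp.support_smul ha)
  have := hs k
  rw [Finsupp.linearCombination_apply, Finsupp.sum] at this
  calc ∑ a ∈ T.biUnion (fun t => (s t).support), ((Finsupp.lapply a) ∘ₗ s) k • a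
      = ∑ a ∈ (s k).support, (s k) a • a := by
        rw [Finset.sum_subset (hsupp k)]
        · rfl
        · intro a _ ha
          rw [Finsupp.notMem_support_iff] at ha
          show s k a • a = 0
          rw [ha, zero_smul]
    _ = k := by simpa using this


variable {Λ : Type} [Ring Λ]

lemma extend_of_ext1 {N A : Type} [AddCommGroup N] [Module Λ N] [AddCommGroup A] [Module Λ A]
    (h1 : Subsingleton (((Ext ℤ (ModuleCat Λ) 1).obj (op (ModuleCat.of Λ N))).obj
      (ModuleCat.of Λ Λ)))
    (p : A →ₗ[Λ] N) (hp : Function.Surjective p) (φ : LinearMap.ker p →ₗ[Λ] Λ) :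
    ∃ Φ : A →ₗ[Λ] Λ, ∀ k : LinearMap.ker p, Φ k = φ k := by
  classical
  let K : Submodule Λ A := LinearMap.ker p
  let w : K →ₗ[Λ] Λ × A := LinearMap.prod (-φ) K.subtype
  set W := LinearMap.range w with hW
  let i : Λ →ₗ[Λ] (Λ × A) ⧸ W := W.mkQ ∘ₗ LinearMap.inl Λ Λ A
  have hliftcond : W ≤ LinearMap.ker (p ∘ₗ LinearMap.snd Λ Λ A) := by
    rintro v ⟨k, rfl⟩
    show p ((w k).2) = 0
    show p (k : A) = 0
    exact k.2
  let πE : ((Λ × A) ⧸ W) →ₗ[Λ] N := W.liftQ (p ∘ₗ LinearMap.snd Λ Λ A) hliftcond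
  have hπEmk : ∀ v : Λ × A, πE (W.mkQ v) = p v.2 := fun v => rfl
  have hi : Function.Injective i := by
    rw [injective_iff_map_eq_zero]
    intro a ha
    have : ((a, 0) : Λ × A) ∈ W := (Submodule.Quotient.mk_eq_zero W).1 ha
    obtain ⟨k, hk⟩ := this
    have h2 : (k : A) = 0 := congrArg Prod.snd hk
    have hk0 : k = 0 := Subtype.ext h2
    have h1 : -φ k = a := congrArg Prod.fst hk
    rw [hk0, map_zero, neg_zero] at h1
    exact h1.symm
  have hπs : Function.Surjective πE := by
    intro n
    obtain ⟨a, ha⟩ := hp n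
    exact ⟨W.mkQ (0, a), ha⟩
  have hex : ∀ e, πE e = 0 ↔ e ∈ LinearMap.range i := by
    intro e
    constructor
    · intro he
      obtain ⟨⟨a, q⟩, rfl⟩ := W.mkQ_surjective e
      have hq : q ∈ K := LinearMap.mem_ker.2 ((hπEmk (a, q)).symm.trans he)
      refine ⟨a + φ ⟨q, hq⟩, ?_⟩
      show W.mkQ (a + φ ⟨q, hq⟩, 0) = W.mkQ (a, q)
      rw [Submodule.mkQ_apply, Submodule.mkQ_apply, Submodule.Quotient.eq]
      refine ⟨-⟨q, hq⟩, ?_⟩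
      show (-φ (-⟨q, hq⟩), (((-⟨q, hq⟩ : K)) : A)) = (a + φ ⟨q, hq⟩ - a, 0 - q)
      rw [map_neg, neg_neg]
      refine Prod.ext ?_ ?_
      · show φ ⟨q, hq⟩ = a + φ ⟨q, hq⟩ - a
        abel
      · show -q = 0 - q
        rw [zero_sub]
    · rintro ⟨a, rfl⟩
      show p ((0 : A)) = 0
      exact map_zero p
  obtain ⟨r, hr⟩ := retraction_of_ext1 h1 i πE hi hπs hex
  refine ⟨r ∘ₗ W.mkQ ∘ₗ LinearMap.inr Λ Λ A, fun k => ?_⟩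
  show r (W.mkQ (0, (k : A))) = φ k
  have : W.mkQ ((0 : Λ), (k : A)) = i (φ k) := by
    show W.mkQ ((0 : Λ), (k : A)) = W.mkQ (φ k, 0)
    rw [Submodule.mkQ_apply, Submodule.mkQ_apply, Submodule.Quotient.eq]
    refine ⟨k, ?_⟩
    refine Prod.ext ?_ ?_
    · show -φ k = 0 - φ k
      rw [zero_sub]
    · show (k : A) = (k : A) - 0
      rw [sub_zero]
  rw [this, hr]

end Aux

/-- `pdLE Λ n M` : the left `Λ`-module `M` has projective dimension at most `n`. -/
def pdLE (Λ : Type) [Ring Λ] : (n : ℕ) → (M : Type) → [AddCommGroup M] → [Module Λ M] → Prop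
  | 0, M, _, _ => Module.Projective Λ M
  | n+1, M, _, _ => ∃ (P : Type) (_ : AddCommGroup P) (_ : Module Λ P) (f : P →ₗ[Λ] M),
      Module.Projective Λ P ∧ Module.Finite Λ P ∧ Function.Surjective f ∧
        pdLE Λ n (LinearMap.ker f)

set_option maxHeartbeats 1600000 in
/-- If `Λ` is a (left and right) Noetherian ring, `P` a finitely generated left `Λ`-module of
projective dimension at most `1`, and `M ⊆ P` a submodule with
`Ext^0_Λ(M, Λ) = 0` and `Ext^1_Λ(M, Λ) = 0` (i.e. `M` is pseudo-null), then `M = 0`. -/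
theorem pseudoNull_submodule_of_pdLE_one_eq_bot
    (Λ : Type) [Ring Λ] [IsNoetherianRing Λ] [IsNoetherianRing Λᵐᵒᵖ]
    (P : Type) [AddCommGroup P] [Module Λ P] [Module.Finite Λ P]
    (hP : pdLE Λ 1 P)
    (M : Submodule Λ P)
    (h0 : Subsingleton
      (((Ext ℤ (ModuleCat Λ) 0).obj (op (ModuleCat.of Λ M))).obj (ModuleCat.of Λ Λ)))
    (h1 : Subsingleton
      (((Ext ℤ (ModuleCat Λ) 1).obj (op (ModuleCat.of Λ M))).obj (ModuleCat.of Λ Λ))) :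
    M = ⊥ := by
  classical
  obtain ⟨F, _, _, f, hFproj, hFfin, hfsurj, hkerproj⟩ := hP
  have hkerP : Module.Projective Λ (LinearMap.ker f) := hkerproj
  have : IsNoetherian Λ F := isNoetherian_of_isNoetherianRing_of_finite Λ F
  have hkerF : Module.Finite Λ (LinearMap.ker f) :=
    Module.Finite.iff_fg.2 (IsNoetherian.noetherian _)
  let Q : Submodule Λ F := M.comap f
  let p : Q →ₗ[Λ] M := f.restrict (fun x hx => hx)
  have hps : Function.Surjective p := by
    rintro ⟨m, hm⟩
    obtain ⟨x, hx⟩ := hfsurj m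
    exact ⟨⟨x, show f x ∈ M by rw [hx]; exact hm⟩, Subtype.ext hx⟩
  have hmem1 : ∀ k : Q, p k = 0 ↔ f (k : F) = 0 := by
    intro k
    constructor
    · intro h
      have h2 := congrArg (Subtype.val) h
      rw [ZeroMemClass.coe_zero] at h2
      exact h2
    · intro h
      exact Subtype.ext (by rw [ZeroMemClass.coe_zero]; exact h)
  let eK : (LinearMap.ker p) ≃ₗ[Λ] (LinearMap.ker f) :=
    { toFun := fun k => ⟨((k : Q) : F), (hmem1 _).1 k.2⟩
      invFun := fun x => ⟨⟨(x : F), show f (x : F) ∈ M by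
          rw [x.2]; exact M.zero_mem⟩, (hmem1 _).2 x.2⟩
      map_add' := fun a b => rfl
      map_smul' := fun c a => rfl
      left_inv := fun a => rfl
      right_inv := fun x => rfl }
  have hprojK : Module.Projective Λ (LinearMap.ker p) := Module.Projective.of_equiv eK.symm
  have hfinK : Module.Finite Λ (LinearMap.ker p) := Module.Finite.equiv eK.symm
  obtain ⟨S, cf, hcf⟩ := dual_basis (Λ := Λ) (K := LinearMap.ker p)
  have hext := fun a => extend_of_ext1 h1 p hps (cf a)
  choose Φex hΦex using hext
  have hvanish : ∀ Φ0 : Q →ₗ[Λ] Λ, (∀ k : LinearMap.ker p, Φ0 k = 0) → Φ0 = 0 := by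
    intro Φ0 hv
    have hle : LinearMap.ker p ≤ LinearMap.ker Φ0 := fun k hk => hv ⟨k, hk⟩
    obtain ⟨ψ, hψ⟩ := descend_aux p hps Φ0 hle
    rw [← hψ, hom_eq_zero_of_ext0 h0 ψ, LinearMap.zero_comp]
  have hQker : ∀ q : Q, f (q : F) = 0 := by
    intro q
    let k0 : Q := ∑ a ∈ S, (Φex a) q • ((LinearMap.ker p).subtype a)
    have key : ∀ Φ0 : Q →ₗ[Λ] Λ, Φ0 q = Φ0 k0 := by
      intro Φ0
      let Ψ : Q →ₗ[Λ] Λ :=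
        Φ0 - ∑ a ∈ S, (Φex a).smulRight (Φ0 ((LinearMap.ker p).subtype a))
      have hΨ0 : Ψ = 0 := by
        refine hvanish Ψ fun k => ?_
        have hΨk : Ψ (k : Q) = Φ0 (k : Q) -
            ∑ a ∈ S, (cf a k) * Φ0 ((LinearMap.ker p).subtype a) := by
          simp only [Ψ, LinearMap.sub_apply, LinearMap.sum_apply, LinearMap.smulRight_apply,
            smul_eq_mul, hΦex]
        have h2 : Φ0 ((k : Q)) = ∑ a ∈ S, (cf a k) * Φ0 ((LinearMap.ker p).subtype a) := by
          conv_lhs => rw [show ((k : Q)) = (LinearMap.ker p).subtype k from rfl, ← hcf k]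
          rw [map_sum, map_sum]
          refine Finset.sum_congr rfl fun a _ => ?_
          rw [map_smul, map_smul, smul_eq_mul]
        rw [hΨk, h2, sub_self]
      have hΨq : Φ0 q - ∑ a ∈ S, (Φex a) q * Φ0 ((LinearMap.ker p).subtype a) = 0 := by
        have h1q : Ψ q = 0 := by rw [hΨ0]; rfl
        simpa only [Ψ, LinearMap.sub_apply, LinearMap.sum_apply, LinearMap.smulRight_apply,
          smul_eq_mul] using h1q
      have hk0v : Φ0 k0 = ∑ a ∈ S, (Φex a) q * Φ0 ((LinearMap.ker p).subtype a) := by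
        simp only [k0, map_sum, map_smul, smul_eq_mul]
      rw [hk0v, ← sub_eq_zero]
      exact hΨq
    have hq : q = k0 := by
      by_contra hne
      have hv : ((q - k0 : Q) : F) ≠ 0 := by
        intro hz
        exact hne (sub_eq_zero.1 (Subtype.ext hz))
      obtain ⟨φF, hφF⟩ := exists_dual_ne_zero (Λ := Λ) hv
      apply hφF
      rw [Submodule.coe_sub, map_sub,
        show φF (q : F) = φF (k0 : F) from key (φF ∘ₗ Q.subtype), sub_self]
    have hpk0 : p k0 = 0 := by
      have hsum : p k0 = ∑ a ∈ S, (Φex a) q • p ((LinearMap.ker p).subtype a) := by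
        simp only [k0, map_sum, map_smul]
      rw [hsum]
      refine Finset.sum_eq_zero fun a _ => ?_
      have ha : p ((LinearMap.ker p).subtype a) = 0 := a.2
      rw [ha, smul_zero]
    exact (hmem1 q).1 (by rw [hq, hpk0])
  rw [eq_bot_iff]
  intro m hm
  obtain ⟨x, hx⟩ := hfsurj m
  have hxQ : x ∈ Q := show f x ∈ M by rw [hx]; exact hm
  rw [Submodule.mem_bot, ← hx]
  exact hQker ⟨x, hxQ⟩
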